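/- Let b > 1. For all integers m, n ≥ 1, the parametric Legendre exponential functions satisfy the weighted orthogonality relation ∫₀¹ b^x E_m(b; x) E_n(b; x) dx = (b−1) δ_{mn}/(b · ln b · (2n−1)). -/

import Mathlib

open Polynomial MeasureTheory Real Filter

/-- The Legendre polynomial of degree `n`, via the Rodrigues formula
`P_n(x) = 1/(2^n n!) dⁿ/dxⁿ (x² - 1)ⁿ`. -/
noncomputable def legendre (n : ℕ) : Polynomial ℝ :=
  (1 / (2 ^ n * n.factorial) : ℝ) • derivative^[n] ((X ^ 2 - 1) ^ n)

/-- The shifted Legendre polynomial `P̃_n(x) = P_n(2x - 1)` on `[0,1]`. -/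
noncomputable def shiftedLegendre (n : ℕ) (x : ℝ) : ℝ :=
  (legendre n).eval (2 * x - 1)

/-- The parametric altered Legendre polynomial
`A_n(b; x) = ((b-1)/b) (x + 1/(b-1)) P̃_{n-1}(x)`. -/
noncomputable def alteredLegendreB (b : ℝ) (n : ℕ) (x : ℝ) : ℝ :=
  ((b - 1) / b) * (x + 1 / (b - 1)) * shiftedLegendre (n - 1) x

/-- The parametric Legendre exponential function
`E_n(b; x) = (-1)^{n-1} A_n(b; (b^{1-x} - 1)/(b-1))`. -/
noncomputable def legendreExpB (b : ℝ) (n : ℕ) (x : ℝ) : ℝ :=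
  (-1) ^ (n - 1) * alteredLegendreB b n ((b ^ (1 - x) - 1) / (b - 1))

/-!
The substitution `u = (b^(1-x) - 1)/(b - 1)` maps `[0,1]` onto `[0,1]` with orientation reversed
and `du = -(b log b/(b - 1)) b^(-x) dx`. Since `α (u + a) = b^(-x)`, the weight `b^x` and the two
factors `α (u + a)` leave exactly `b^(-x) dx`, so the integral becomes
`(b - 1)/(b log b) ∫₀¹ P̃_{m-1} P̃_{n-1}`: the classical orthogonality of the shifted Legendre
polynomials. That in turn follows from Rodrigues' formula by `n`-fold integration by parts, the
boundary terms vanishing because `±1` are roots of order `n` of `(x² - 1)ⁿ`, together with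
`∫₋₁¹ (1 - x²)ⁿ = 2^(2n+1) n!² / (2n+1)!`.
-/

open scoped Nat

lemma eval_iterate_derivative_pow_eq_zero {R : Type*} [CommSemiring R] {p : R[X]} {c : R}
    (hc : p.IsRoot c) {n k : ℕ} (hk : k < n) : (derivative^[k] (p ^ n)).eval c = 0 := by
  obtain ⟨r, hr⟩ := pow_sub_dvd_iterate_derivative_pow p n k
  rw [hr, eval_mul, eval_pow, hc.eq_zero, zero_pow (Nat.sub_ne_zero_of_lt hk), zero_mul]

lemma iterate_derivative_natDegree_of_monic {R : Type*} [Semiring R] {p : R[X]} (hp : p.Monic) :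
    derivative^[p.natDegree] p = C (p.natDegree ! : R) := by
  have hdeg : (derivative^[p.natDegree] p).natDegree = 0 := by
    have := natDegree_iterate_derivative p p.natDegree
    omega
  rw [eq_C_of_natDegree_eq_zero hdeg, coeff_iterate_derivative, zero_add, Nat.descFactorial_self,
    hp.coeff_natDegree, nsmul_one]

lemma monic_X_sq_sub_one {R : Type*} [CommRing R] [Nontrivial R] : (X ^ 2 - 1 : R[X]).Monic := by
  simpa using monic_X_pow_sub_C (1 : R) two_ne_zero

lemma natDegree_X_sq_sub_one_pow {R : Type*} [CommRing R] [Nontrivial R] (n : ℕ) :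
    ((X ^ 2 - 1 : R[X]) ^ n).natDegree = 2 * n := by
  rw [monic_X_sq_sub_one.natDegree_pow, ← C_1, natDegree_X_pow_sub_C, mul_comm]

lemma integral_derivative_mul_eval_of_eval_eq_zero {a b : ℝ} (p q : ℝ[X]) (ha : p.eval a = 0)
    (hb : p.eval b = 0) :
    ∫ x in a..b, (derivative p).eval x * q.eval x =
      -∫ x in a..b, p.eval x * (derivative q).eval x := by
  have h := intervalIntegral.integral_mul_deriv_eq_deriv_mul (a := a) (b := b)
    (fun x _ => p.hasDerivAt x) (fun x _ => q.hasDerivAt x)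
    ((derivative p).continuous.intervalIntegrable _ _)
    ((derivative q).continuous.intervalIntegrable _ _)
  rw [ha, hb, zero_mul, zero_mul, sub_zero, zero_sub] at h
  linarith

lemma integral_iterate_derivative_mul_eval {a b : ℝ} (n : ℕ) (p q : ℝ[X])
    (ha : ∀ k < n, (derivative^[k] p).eval a = 0) (hb : ∀ k < n, (derivative^[k] p).eval b = 0) :
    ∫ x in a..b, (derivative^[n] p).eval x * q.eval x =
      (-1) ^ n * ∫ x in a..b, p.eval x * (derivative^[n] q).eval x := by
  induction n generalizing q with
  | zero => simp
  | succ n ih =>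
    rw [Function.iterate_succ_apply', integral_derivative_mul_eval_of_eval_eq_zero _ _
      (ha n n.lt_succ_self) (hb n n.lt_succ_self), ih (derivative q) (fun k hk => ha k (by omega))
      (fun k hk => hb k (by omega)), ← Function.iterate_succ_apply, pow_succ]
    ring

lemma integral_one_sub_sq_pow_succ (n : ℕ) :
    ∫ x in (-1:ℝ)..1, (1 - x ^ 2) ^ (n + 1) =
      (2 * n + 2 : ℝ) / (2 * n + 3) * ∫ x in (-1:ℝ)..1, (1 - x ^ 2) ^ n := by
  have hderiv (x : ℝ) : HasDerivAt (fun x : ℝ => (1 - x ^ 2) ^ (n + 1))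
      (-(2 * n + 2) * (x * (1 - x ^ 2) ^ n)) x := by
    refine (((hasDerivAt_pow 2 x).const_sub 1).fun_pow (n + 1)).congr_deriv ?_
    push_cast
    ring
  have hint (k : ℕ) : IntervalIntegrable (fun x : ℝ => (1 - x ^ 2) ^ k) volume (-1) 1 :=
    (by fun_prop : Continuous fun x : ℝ => (1 - x ^ 2) ^ k).intervalIntegrable _ _
  -- integrate by parts against `x`, then use `x² (1 - x²)ⁿ = (1 - x²)ⁿ - (1 - x²)ⁿ⁺¹`
  have hibp : ∫ x in (-1:ℝ)..1, (1 - x ^ 2) ^ (n + 1) =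
      (2 * n + 2 : ℝ) * ∫ x in (-1:ℝ)..1, ((1 - x ^ 2) ^ n - (1 - x ^ 2) ^ (n + 1)) := by
    have h := intervalIntegral.integral_mul_deriv_eq_deriv_mul (fun x _ => hderiv x)
      (fun x _ => hasDerivAt_id x) (Continuous.intervalIntegrable (by fun_prop) (-1) 1)
      (intervalIntegrable_const (c := (1 : ℝ)))
    simp only [mul_one, id] at h
    rw [h]
    norm_num
    rw [← intervalIntegral.integral_neg, ← intervalIntegral.integral_const_mul]
    refine intervalIntegral.integral_congr fun x _ => ?_
    ring
  rw [intervalIntegral.integral_sub (hint n) (hint (n + 1))] at hibp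
  field_simp
  linarith

lemma integral_one_sub_sq_pow (n : ℕ) :
    ∫ x in (-1:ℝ)..1, (1 - x ^ 2) ^ n = 2 ^ (2 * n + 1) * (n ! : ℝ) ^ 2 / (2 * n + 1)! := by
  induction n with
  | zero => norm_num
  | succ n ih =>
    rw [integral_one_sub_sq_pow_succ, ih, show 2 * (n + 1) + 1 = 2 * n + 1 + 1 + 1 by ring,
      Nat.factorial_succ (2 * n + 1 + 1), Nat.factorial_succ (2 * n + 1), Nat.factorial_succ n]
    push_cast
    field_simp
    ring

lemma natDegree_legendre_le (n : ℕ) : (legendre n).natDegree ≤ n := by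
  have := natDegree_iterate_derivative ((X ^ 2 - 1 : ℝ[X]) ^ n) n
  rw [natDegree_X_sq_sub_one_pow] at this
  exact (natDegree_smul_le _ _).trans (by omega)

lemma iterate_derivative_legendre_self (n : ℕ) :
    derivative^[n] (legendre n) = C (((2 * n)! / (2 ^ n * n !) : ℝ)) := by
  have h := iterate_derivative_natDegree_of_monic (monic_X_sq_sub_one.pow n (R := ℝ))
  rw [natDegree_X_sq_sub_one_pow] at h
  unfold legendre
  rw [iterate_derivative_smul, ← Function.iterate_add_apply, ← two_mul, h, smul_C, smul_eq_mul]
  congr 1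
  ring

lemma integral_legendre_mul (n : ℕ) (q : ℝ[X]) :
    ∫ x in (-1:ℝ)..1, (legendre n).eval x * q.eval x =
      ((2 : ℝ) ^ n * n !)⁻¹ * ∫ x in (-1:ℝ)..1, (1 - x ^ 2) ^ n * (derivative^[n] q).eval x := by
  have hroot : ∀ c : ℝ, c ^ 2 = 1 → (X ^ 2 - 1 : ℝ[X]).IsRoot c := fun c hc => by simp [hc]
  simp only [legendre, eval_smul, smul_eq_mul, mul_assoc]
  rw [intervalIntegral.integral_const_mul, integral_iterate_derivative_mul_eval n _ q
    (fun k hk => eval_iterate_derivative_pow_eq_zero (hroot _ (by norm_num)) hk)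
    (fun k hk => eval_iterate_derivative_pow_eq_zero (hroot _ (by norm_num)) hk),
    ← intervalIntegral.integral_const_mul, one_div]
  congr 1
  refine intervalIntegral.integral_congr fun x _ => ?_
  rw [← mul_assoc, eval_pow, eval_sub, eval_pow, eval_X, eval_one, ← mul_pow, neg_one_mul, neg_sub]

lemma integral_legendre_mul_eq_zero {n : ℕ} {q : ℝ[X]} (hq : q.natDegree < n) :
    ∫ x in (-1:ℝ)..1, (legendre n).eval x * q.eval x = 0 := by
  rw [integral_legendre_mul, iterate_derivative_eq_zero hq]
  simp

lemma integral_legendre_mul_self (n : ℕ) :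
    ∫ x in (-1:ℝ)..1, (legendre n).eval x * (legendre n).eval x = (2 : ℝ) / (2 * n + 1) := by
  rw [integral_legendre_mul, iterate_derivative_legendre_self]
  simp only [eval_C]
  rw [intervalIntegral.integral_mul_const, integral_one_sub_sq_pow, Nat.factorial_succ]
  push_cast
  field_simp
  ring

lemma integral_legendre_mul_legendre (m n : ℕ) :
    ∫ x in (-1:ℝ)..1, (legendre m).eval x * (legendre n).eval x =
      if m = n then (2 : ℝ) / (2 * n + 1) else 0 := by
  rcases lt_trichotomy m n with h | rfl | h
  · simp_rw [if_neg h.ne, mul_comm ((legendre m).eval _)]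
    exact integral_legendre_mul_eq_zero ((natDegree_legendre_le m).trans_lt h)
  · rw [if_pos rfl, integral_legendre_mul_self]
  · rw [if_neg h.ne']
    exact integral_legendre_mul_eq_zero ((natDegree_legendre_le n).trans_lt h)

lemma continuous_shiftedLegendre (n : ℕ) : Continuous (shiftedLegendre n) :=
  (legendre n).continuous.comp (by fun_prop)

lemma integral_shiftedLegendre_mul_shiftedLegendre (m n : ℕ) :
    ∫ x in (0:ℝ)..1, shiftedLegendre m x * shiftedLegendre n x =
      if m = n then (1 : ℝ) / (2 * n + 1) else 0 := by
  unfold _root_.shiftedLegendre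
  rw [intervalIntegral.integral_comp_mul_sub (fun u => (legendre m).eval u * (legendre n).eval u)
    two_ne_zero 1]
  norm_num
  rw [integral_legendre_mul_legendre]
  split_ifs <;> ring

lemma legendreExpB_eq {b : ℝ} (hb0 : 0 < b) (hb1 : b ≠ 1) (n : ℕ) (x : ℝ) :
    legendreExpB b n x =
      (-1) ^ (n - 1) * b ^ (-x) * shiftedLegendre (n - 1) ((b ^ (1 - x) - 1) / (b - 1)) := by
  have hb1' : b - 1 ≠ 0 := sub_ne_zero.mpr hb1
  have hweight : (b - 1) / b * ((b ^ (1 - x) - 1) / (b - 1) + 1 / (b - 1)) = b ^ (-x) := by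
    rw [rpow_sub hb0, rpow_one, rpow_neg hb0.le]
    field_simp
    ring
  rw [legendreExpB, alteredLegendreB, hweight, mul_assoc]

lemma integral_rpow_neg_mul_comp {b : ℝ} (hb0 : 0 < b) (hb1 : b ≠ 1) {g : ℝ → ℝ}
    (hg : Continuous g) :
    ∫ x in (0:ℝ)..1, b ^ (-x) * g ((b ^ (1 - x) - 1) / (b - 1)) =
      (b - 1) / (b * log b) * ∫ u in (0:ℝ)..1, g u := by
  have hb1' : b - 1 ≠ 0 := sub_ne_zero.mpr hb1
  have hlog : log b ≠ 0 := log_ne_zero_of_pos_of_ne_one hb0 hb1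
  set c := -(b * log b) / (b - 1) with hc_def
  have hc : c ≠ 0 := div_ne_zero (neg_ne_zero.mpr (mul_ne_zero hb0.ne' hlog)) hb1'
  have hderiv (x : ℝ) : HasDerivAt (fun x => (b ^ (1 - x) - 1) / (b - 1)) (c * b ^ (-x)) x := by
    refine ((((hasStrictDerivAt_const_rpow hb0 (1 - x)).hasDerivAt.comp x
      ((hasDerivAt_id x).const_sub 1)).sub_const 1).div_const (b - 1)).congr_deriv ?_
    rw [rpow_sub hb0, rpow_one, rpow_neg hb0.le, hc_def]
    field_simp
  have hcont : Continuous fun x : ℝ => c * b ^ (-x) :=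
    continuous_const.mul (continuous_const.rpow continuous_neg fun _ => Or.inl hb0.ne')
  calc ∫ x in (0:ℝ)..1, b ^ (-x) * g ((b ^ (1 - x) - 1) / (b - 1))
      = c⁻¹ * ∫ x in (0:ℝ)..1, (g ∘ fun x => (b ^ (1 - x) - 1) / (b - 1)) x * (c * b ^ (-x)) := by
        rw [← intervalIntegral.integral_const_mul]
        refine intervalIntegral.integral_congr fun x _ => ?_
        simp only [Function.comp]
        field_simp
    _ = (b - 1) / (b * log b) * ∫ u in (0:ℝ)..1, g u := by
        rw [intervalIntegral.integral_comp_mul_deriv (fun x _ => hderiv x) hcont.continuousOn hg,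
          intervalIntegral.integral_symm, sub_self, sub_zero, rpow_zero, rpow_one, sub_self,
          zero_div, div_self hb1', hc_def, inv_div]
        ring

/-- Weighted orthogonality of the parametric Legendre exponential functions:
`∫₀¹ b^x E_m(b;x) E_n(b;x) dx = (b-1) δ_{mn}/(b ln b (2n-1))`. -/
theorem legendreExpB_orthogonality (b : ℝ) (hb : 1 < b) (m n : ℕ) (hm : 1 ≤ m)
    (hn : 1 ≤ n) :
    ∫ x in (0:ℝ)..1, b ^ x * legendreExpB b m x * legendreExpB b n x =
      (b - 1) * (if m = n then 1 else 0) / (b * Real.log b * (2 * (n : ℝ) - 1)) := by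
  have hb0 : 0 < b := by linarith
  have hb1 : b ≠ 1 := hb.ne'
  have hintegrand (x : ℝ) : b ^ x * legendreExpB b m x * legendreExpB b n x =
      (-1) ^ (m - 1 + (n - 1)) * (b ^ (-x) *
        (shiftedLegendre (m - 1) ((b ^ (1 - x) - 1) / (b - 1)) *
          shiftedLegendre (n - 1) ((b ^ (1 - x) - 1) / (b - 1)))) := by
    rw [legendreExpB_eq hb0 hb1, legendreExpB_eq hb0 hb1, rpow_neg hb0.le, pow_add]
    field_simp
  simp_rw [hintegrand]
  rw [intervalIntegral.integral_const_mul, integral_rpow_neg_mul_comp hb0 hb1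
    (g := fun u => shiftedLegendre (m - 1) u * shiftedLegendre (n - 1) u)
    ((continuous_shiftedLegendre _).mul (continuous_shiftedLegendre _)),
    integral_shiftedLegendre_mul_shiftedLegendre]
  obtain rfl | hmn := eq_or_ne m n
  · rw [if_pos rfl, if_pos rfl, ← two_mul, pow_mul, neg_one_sq, one_pow, Nat.cast_sub hn]
    field_simp
    ring
  · rw [if_neg hmn, if_neg (by omega)]
    simp
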